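/- For any fixed X ∈ ℝ^{n×p}, the linear mapping J_A(X) on ℝ^{n×p} given by J_A(X)[D] = (1/8) D (15 I_p - 10 X^T X + 3 (X^T X)^2) - X Φ(X^T D) + (3/2) X Φ(Φ(X^T D)(X^T X - I_p)) is self-adjoint with respect to the trace inner product ⟨A,B⟩ = tr(A^T B). -/

import Mathlib

open Matrix

/-- The symmetrization operator `Φ(M) = (M + Mᵀ)/2`. -/
noncomputable def symPart {p : ℕ} (M : Matrix (Fin p) (Fin p) ℝ) : Matrix (Fin p) (Fin p) ℝ :=
  (1 / 2 : ℝ) • (M + Mᵀ)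

/-- The Jacobian of the constraint dissolving mapping at `X` applied to `D`. -/
noncomputable def cdJac {n p : ℕ} (X D : Matrix (Fin n) (Fin p) ℝ) :
    Matrix (Fin n) (Fin p) ℝ :=
  (1 / 8 : ℝ) • (D * ((15 : ℝ) • (1 : Matrix (Fin p) (Fin p) ℝ)
      - (10 : ℝ) • (Xᵀ * X) + (3 : ℝ) • (Xᵀ * X) ^ 2))
    - X * symPart (Xᵀ * D)
    + (3 / 2 : ℝ) • (X * symPart (symPart (Xᵀ * D) * (Xᵀ * X - 1)))

/-!
Write `⟨A, B⟩ = tr (Aᵀ B)`. Each of the three summands of `J_A(X)` is self-adjoint on its own: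
`⟨D P, W⟩ = tr (P Dᵀ W)` is symmetric in `D, W` because `P`, a polynomial in `XᵀX`, is
symmetric, and for the other two, `⟨X Φ(K), W⟩ = tr (Φ(K) Φ(Xᵀ W))`, so with `S_D = Φ(Xᵀ D)`
they become `tr (S_D S_W)` and `tr (S_D C S_W)` with `C = XᵀX - I` symmetric, both invariant
under `D ↔ W`.
-/

namespace Matrix

variable {m n R : Type*} [Fintype m] [Fintype n] [CommSemiring R]

theorem trace_transpose_mul_comm (A B : Matrix m n R) : trace (Aᵀ * B) = trace (Bᵀ * A) := by
  rw [← trace_transpose, transpose_mul, transpose_transpose]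

theorem IsSymm.trace_transpose_mul_mul {P : Matrix n n R} (hP : P.IsSymm) (D W : Matrix m n R) :
    trace ((D * P)ᵀ * W) = trace ((W * P)ᵀ * D) := by
  rw [trace_transpose_mul_comm, transpose_mul, hP.eq, Matrix.mul_assoc P, trace_mul_comm P,
    Matrix.mul_assoc]

theorem IsSymm.trace_mul_mul_comm {A B C : Matrix n n R} (hA : A.IsSymm) (hB : B.IsSymm)
    (hC : C.IsSymm) : trace (A * C * B) = trace (B * C * A) := by
  rw [← trace_transpose, transpose_mul, transpose_mul, hA.eq, hB.eq, hC.eq, Matrix.mul_assoc]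

theorem IsSymm.trace_transpose_mul {S : Matrix n n R} (hS : S.IsSymm) (M : Matrix n n R) :
    trace (Mᵀ * S) = trace (M * S) := by
  rw [← trace_transpose, transpose_mul, transpose_transpose, hS.eq, trace_mul_comm]

end Matrix

theorem isSymm_symPart {p : ℕ} (M : Matrix (Fin p) (Fin p) ℝ) : (symPart M).IsSymm :=
  (isSymm_add_transpose_self M).smul _

theorem trace_symPart_mul_of_isSymm {p : ℕ} (M : Matrix (Fin p) (Fin p) ℝ)
    {S : Matrix (Fin p) (Fin p) ℝ} (hS : S.IsSymm) : trace (symPart M * S) = trace (M * S) := by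
  rw [symPart, Matrix.smul_mul, Matrix.add_mul, trace_smul, trace_add, hS.trace_transpose_mul]
  ring

theorem trace_transpose_mul_symPart {n p : ℕ} (X W : Matrix (Fin n) (Fin p) ℝ)
    (K : Matrix (Fin p) (Fin p) ℝ) :
    trace ((X * symPart K)ᵀ * W) = trace (symPart (Xᵀ * W) * symPart K) := by
  rw [transpose_mul, (isSymm_symPart K).eq, Matrix.mul_assoc, trace_mul_comm,
    trace_symPart_mul_of_isSymm _ (isSymm_symPart K)]

theorem trace_transpose_mul_symPart_comm {n p : ℕ} (X D W : Matrix (Fin n) (Fin p) ℝ) :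
    trace ((X * symPart (Xᵀ * D))ᵀ * W) = trace ((X * symPart (Xᵀ * W))ᵀ * D) := by
  rw [trace_transpose_mul_symPart, trace_transpose_mul_symPart, trace_mul_comm]

theorem trace_transpose_mul_symPart_mul_comm {n p : ℕ} (X D W : Matrix (Fin n) (Fin p) ℝ)
    {C : Matrix (Fin p) (Fin p) ℝ} (hC : C.IsSymm) :
    trace ((X * symPart (symPart (Xᵀ * D) * C))ᵀ * W)
      = trace ((X * symPart (symPart (Xᵀ * W) * C))ᵀ * D) := by
  rw [trace_transpose_mul_symPart, trace_transpose_mul_symPart, trace_mul_comm (symPart (Xᵀ * W)),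
    trace_mul_comm (symPart (Xᵀ * D)), trace_symPart_mul_of_isSymm _ (isSymm_symPart _),
    trace_symPart_mul_of_isSymm _ (isSymm_symPart _)]
  exact (isSymm_symPart _).trace_mul_mul_comm (isSymm_symPart _) hC

theorem stmt_9 {n p : ℕ} (X : Matrix (Fin n) (Fin p) ℝ)
    (D W : Matrix (Fin n) (Fin p) ℝ) :
    Matrix.trace ((cdJac X D)ᵀ * W) = Matrix.trace (Dᵀ * cdJac X W) := by
  have hG : (Xᵀ * X).IsSymm := by rw [IsSymm, transpose_mul, transpose_transpose]
  have hP : ((15 : ℝ) • (1 : Matrix (Fin p) (Fin p) ℝ) - (10 : ℝ) • (Xᵀ * X)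
      + (3 : ℝ) • (Xᵀ * X) ^ 2).IsSymm :=
    ((isSymm_one.smul _).sub (hG.smul _)).add ((hG.pow 2).smul _)
  rw [trace_transpose_mul_comm D]
  simp only [cdJac, transpose_add, transpose_sub, transpose_smul, Matrix.add_mul, Matrix.sub_mul,
    Matrix.smul_mul, trace_add, trace_sub, trace_smul, hP.trace_transpose_mul_mul D W,
    trace_transpose_mul_symPart_comm X D W,
    trace_transpose_mul_symPart_mul_comm X D W (hG.sub isSymm_one)]
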